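/- Let S be an inverse semigroup and ρ₁, ρ₂ left congruences on S. Then ρ₁ ⊆ ρ₂ if and only if trace(ρ₁) ⊆ trace(ρ₂) and InK(ρ₁) ⊆ InK(ρ₂). Consequently, ρ₁ = ρ₂ if and only if they have the same trace and the same inverse kernel. -/

import Mathlib

class InverseSemigroup (S : Type*) extends Semigroup S where
  inv : S → S
  mul_inv_mul : ∀ a : S, a * inv a * a = a
  inv_mul_inv : ∀ a : S, inv a * a * inv a = inv a
  inv_unique : ∀ a b : S, a * b * a = a → b * a * b = b → b = inv a

open InverseSemigroup

/-- `e` is an idempotent. -/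
def IsIdem {S : Type*} [Mul S] (e : S) : Prop := e * e = e

/-- `r` is a left congruence: an equivalence relation compatible with left multiplication. -/
def IsLeftCongruence {S : Type*} [Semigroup S] (r : S → S → Prop) : Prop :=
  Equivalence r ∧ ∀ a b c : S, r a b → r (c * a) (c * b)

/-- The inverse kernel of a relation: elements related to `a * a⁻¹`. -/
def InK {S : Type*} [InverseSemigroup S] (r : S → S → Prop) : Set S :=
  {a | r a (a * inv a)}

/-- The kernel: elements related to some idempotent. -/
def lker {S : Type*} [InverseSemigroup S] (r : S → S → Prop) : Set S :=
  {a | ∃ e, IsIdem e ∧ r a e}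

/-- `τ` is a congruence on the semilattice of idempotents `E(S)`. -/
def IsECong {S : Type*} [InverseSemigroup S] (τ : S → S → Prop) : Prop :=
  (∀ e f, τ e f → IsIdem e ∧ IsIdem f) ∧
  (∀ e, IsIdem e → τ e e) ∧
  (∀ e f, τ e f → τ f e) ∧
  (∀ e f g, τ e f → τ f g → τ e g) ∧
  (∀ e f g, IsIdem g → τ e f → τ (g * e) (g * f))

/-- The normaliser of a congruence on the idempotents. -/
def normaliser {S : Type*} [InverseSemigroup S] (τ : S → S → Prop) : Set S :=
  {a | ∀ e f, τ e f → τ (a * e * inv a) (a * f * inv a) ∧ τ (inv a * e * a) (inv a * f * a)}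

/-- `T` is a full inverse subsemigroup of `S`. -/
def IsFullInverseSub {S : Type*} [InverseSemigroup S] (T : Set S) : Prop :=
  (∀ e : S, IsIdem e → e ∈ T) ∧ (∀ a b, a ∈ T → b ∈ T → a * b ∈ T) ∧
  (∀ a, a ∈ T → inv a ∈ T)

/-!
Assume the trace and inverse kernel of `ρ₁` lie in those of `ρ₂`, and let `a ρ₁ b`. Then
`x = a⁻¹b` lies in the inverse kernel of `ρ₁` (left-multiply `b⁻¹a ρ₁ b⁻¹b` by `x`), and
`a⁻¹a ρ₁ a⁻¹b = x ρ₁ xx⁻¹` relates two idempotents. Transferring both facts to `ρ₂` gives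
`x ρ₂ a⁻¹a`, hence `aa⁻¹b ρ₂ a` after left multiplication by `a`. By symmetry `bb⁻¹a ρ₂ b`,
and since idempotents commute, `bb⁻¹ · aa⁻¹b = aa⁻¹b`, which links `a` to `b`.
-/

namespace InverseSemigroup

variable {S : Type*} [InverseSemigroup S]

theorem inv_inv (a : S) : inv (inv a) = a :=
  (inv_unique (inv a) a (inv_mul_inv a) (mul_inv_mul a)).symm

theorem isIdem_mul_inv (a : S) : IsIdem (a * inv a) := by
  rw [IsIdem, ← mul_assoc, mul_inv_mul]

theorem isIdem_inv_mul (a : S) : IsIdem (inv a * a) := by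
  rw [IsIdem, ← mul_assoc, inv_mul_inv]

theorem _root_.IsIdem.inv_eq {e : S} (he : IsIdem e) : inv e = e :=
  (inv_unique e e (by rw [he, he]) (by rw [he, he])).symm

theorem _root_.IsIdem.mul {e f : S} (he : IsIdem e) (hf : IsIdem f) : IsIdem (e * f) := by
  set x := inv (e * f)
  -- `f * x * e` is a second inverse of `e * f`, and it is visibly idempotent
  have hx : f * x * e = x := by
    refine inv_unique (e * f) (f * x * e) ?_ ?_
    · calc e * f * (f * x * e) * (e * f) = e * (f * f) * x * ((e * e) * f) := by
            simp only [mul_assoc]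
        _ = e * f := by rw [he, hf, mul_inv_mul]
    · calc f * x * e * (e * f) * (f * x * e) = f * (x * ((e * e) * (f * f)) * x) * e := by
            simp only [mul_assoc]
        _ = f * x * e := by rw [he, hf, inv_mul_inv]
  have hx_idem : IsIdem x := by
    calc x * x = f * x * e * (f * x * e) := by rw [hx]
      _ = f * (x * (e * f) * x) * e := by simp only [mul_assoc]
      _ = x := by rw [inv_mul_inv, hx]
  rwa [← inv_inv (e * f), hx_idem.inv_eq]

theorem _root_.IsIdem.commute {e f : S} (he : IsIdem e) (hf : IsIdem f) : e * f = f * e := by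
  have hef : IsIdem (e * f) := he.mul hf
  have hfe : IsIdem (f * e) := hf.mul he
  rw [← hef.inv_eq]
  refine (inv_unique (e * f) (f * e) ?_ ?_).symm
  · calc e * f * (f * e) * (e * f) = e * (f * f) * ((e * e) * f) := by simp only [mul_assoc]
      _ = e * f := by rw [he, hf]; exact hef
  · calc f * e * (e * f) * (f * e) = f * (e * e) * ((f * f) * e) := by simp only [mul_assoc]
      _ = f * e := by rw [he, hf]; exact hfe

theorem mul_inv_rev (a b : S) : inv (a * b) = inv b * inv a := by
  have hcomm := (isIdem_mul_inv b).commute (isIdem_inv_mul a)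
  refine (inv_unique (a * b) (inv b * inv a) ?_ ?_).symm
  · calc a * b * (inv b * inv a) * (a * b) = a * ((b * inv b) * (inv a * a)) * b := by
          simp only [mul_assoc]
      _ = a * inv a * a * (b * inv b * b) := by rw [hcomm]; simp only [mul_assoc]
      _ = a * b := by rw [mul_inv_mul, mul_inv_mul]
  · calc inv b * inv a * (a * b) * (inv b * inv a)
          = inv b * ((inv a * a) * (b * inv b)) * inv a := by simp only [mul_assoc]
      _ = inv b * b * inv b * (inv a * a * inv a) := by rw [← hcomm]; simp only [mul_assoc]
      _ = inv b * inv a := by rw [inv_mul_inv, inv_mul_inv]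

variable {r r₁ r₂ : S → S → Prop}

theorem inv_mul_mem_inK (hr : IsLeftCongruence r) {a b : S} (hab : r a b) :
    inv a * b ∈ InK r := by
  have h := hr.2 _ _ (inv a * b) (hr.2 _ _ (inv b) hab)
  rw [mul_assoc (inv a) b (inv b * b), ← mul_assoc b, mul_inv_mul] at h
  show r (inv a * b) (inv a * b * inv (inv a * b))
  rw [mul_inv_rev, inv_inv]
  exact hr.1.symm h

theorem rel_mul_inv_mul_of_trace_of_inK (h₁ : IsLeftCongruence r₁) (h₂ : IsLeftCongruence r₂)
    (htr : ∀ e f, IsIdem e → IsIdem f → r₁ e f → r₂ e f) (hk : InK r₁ ⊆ InK r₂)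
    {a b : S} (hab : r₁ a b) : r₂ (a * inv a * b) a := by
  have hx₁ : r₁ (inv a * b) (inv a * b * inv (inv a * b)) := inv_mul_mem_inK h₁ hab
  have hx₂ : r₂ (inv a * b) (inv a * b * inv (inv a * b)) := hk hx₁
  have hidem : r₂ (inv a * a) (inv a * b * inv (inv a * b)) :=
    htr _ _ (isIdem_inv_mul a) (isIdem_mul_inv _) (h₁.1.trans (h₁.2 _ _ (inv a) hab) hx₁)
  have h := h₂.2 _ _ a (h₂.1.trans hx₂ (h₂.1.symm hidem))
  simpa only [← mul_assoc, mul_inv_mul] using h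

theorem rel_of_trace_of_inK (h₁ : IsLeftCongruence r₁) (h₂ : IsLeftCongruence r₂)
    (htr : ∀ e f, IsIdem e → IsIdem f → r₁ e f → r₂ e f) (hk : InK r₁ ⊆ InK r₂)
    {a b : S} (hab : r₁ a b) : r₂ a b := by
  have hab₂ := rel_mul_inv_mul_of_trace_of_inK h₁ h₂ htr hk hab
  have hba₂ := rel_mul_inv_mul_of_trace_of_inK h₁ h₂ htr hk (h₁.1.symm hab)
  have habsorb : b * inv b * (a * inv a * b) = a * inv a * b := by
    rw [← mul_assoc, (isIdem_mul_inv b).commute (isIdem_mul_inv a), mul_assoc (a * inv a),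
      mul_inv_mul]
  have h := h₂.2 _ _ (b * inv b) hab₂
  rw [habsorb] at h
  exact h₂.1.trans (h₂.1.symm hab₂) (h₂.1.trans h hba₂)

theorem le_iff_trace_le_and_inK_subset (h₁ : IsLeftCongruence r₁)
    (h₂ : IsLeftCongruence r₂) :
    (∀ a b, r₁ a b → r₂ a b) ↔
      (∀ e f, IsIdem e → IsIdem f → r₁ e f → r₂ e f) ∧ InK r₁ ⊆ InK r₂ :=
  ⟨fun h => ⟨fun _ _ _ _ hef => h _ _ hef, fun _ ha => h _ _ ha⟩,
    fun ⟨htr, hk⟩ _ _ => rel_of_trace_of_inK h₁ h₂ htr hk⟩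

end InverseSemigroup

theorem stmt7 {S : Type*} [InverseSemigroup S] (r₁ r₂ : S → S → Prop)
    (h₁ : IsLeftCongruence r₁) (h₂ : IsLeftCongruence r₂) :
    ((∀ a b, r₁ a b → r₂ a b) ↔
      ((∀ e f, IsIdem e → IsIdem f → r₁ e f → r₂ e f) ∧ InK r₁ ⊆ InK r₂)) ∧
    ((r₁ = r₂) ↔
      ((∀ e f : S, IsIdem e → IsIdem f → (r₁ e f ↔ r₂ e f)) ∧ InK r₁ = InK r₂)) := by
  refine ⟨le_iff_trace_le_and_inK_subset h₁ h₂, ⟨?_, ?_⟩⟩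
  · rintro rfl
    exact ⟨fun _ _ _ _ => Iff.rfl, rfl⟩
  · rintro ⟨htr, hk⟩
    funext a b
    exact propext
      ⟨rel_of_trace_of_inK h₁ h₂ (fun e f he hf => (htr e f he hf).mp) hk.le,
        rel_of_trace_of_inK h₂ h₁ (fun e f he hf => (htr e f he hf).mpr) hk.ge⟩
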